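/- arXiv:1003.2825 — 4 statements merged into one kernel-verified Lean document; each statement's English description precedes it below -/
import Mathlib

section
/- Let A, B, C ∈ SL(2, ℂ) and set t₁ = tr A, t₂ = tr B, t₃ = tr C, t₄ = tr(A·B·C), t₁₂ = tr(A·B), t₁₃ = tr(A·C), t₂₃ = tr(B·C). Then t₁₂² + t₂₃² + t₁₃² + t₁₂·t₂₃·t₁₃ − (t₁t₂ + t₃t₄)·t₁₂ − (t₂t₃ + t₁t₄)·t₂₃ − (t₁t₃ + t₂t₄)·t₁₃ − (4 − t₁² − t₂² − t₃² − t₄² − t₁t₂t₃t₄) = 0. -/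
/-- The trace of an element of `SL(2,ℂ)`, viewed as a matrix. -/
noncomputable def trSL2 (A : Matrix.SpecialLinearGroup (Fin 2) ℂ) : ℂ :=
  Matrix.trace (A : Matrix (Fin 2) (Fin 2) ℂ)

/-- The Fricke relation: the seven trace coordinates of any triple in `SL(2,ℂ)`
satisfy the defining equation `k = 0` of the rank-3 character variety. -/
theorem fricke_relation (A B C : Matrix.SpecialLinearGroup (Fin 2) ℂ)
    (t₁ t₂ t₃ t₄ t₁₂ t₁₃ t₂₃ : ℂ)
    (h₁ : t₁ = trSL2 A) (h₂ : t₂ = trSL2 B) (h₃ : t₃ = trSL2 C)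
    (h₄ : t₄ = trSL2 (A * B * C))
    (h₁₂ : t₁₂ = trSL2 (A * B)) (h₁₃ : t₁₃ = trSL2 (A * C)) (h₂₃ : t₂₃ = trSL2 (B * C)) :
    t₁₂ ^ 2 + t₂₃ ^ 2 + t₁₃ ^ 2 + t₁₂ * t₂₃ * t₁₃
      - (t₁ * t₂ + t₃ * t₄) * t₁₂ - (t₂ * t₃ + t₁ * t₄) * t₂₃ - (t₁ * t₃ + t₂ * t₄) * t₁₃
      - (4 - t₁ ^ 2 - t₂ ^ 2 - t₃ ^ 2 - t₄ ^ 2 - t₁ * t₂ * t₃ * t₄) = 0 := by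
  subst h₁ h₂ h₃ h₄ h₁₂ h₁₃ h₂₃
  have hA : A.1 0 0 * A.1 1 1 - A.1 0 1 * A.1 1 0 = 1 := by
    have := A.2; rwa [Matrix.det_fin_two] at this
  have hB : B.1 0 0 * B.1 1 1 - B.1 0 1 * B.1 1 0 = 1 := by
    have := B.2; rwa [Matrix.det_fin_two] at this
  have hC : C.1 0 0 * C.1 1 1 - C.1 0 1 * C.1 1 0 = 1 := by
    have := C.2; rwa [Matrix.det_fin_two] at this
  simp only [trSL2, Matrix.SpecialLinearGroup.coe_mul, Matrix.trace_fin_two,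
    Matrix.mul_apply, Fin.sum_univ_two]
  set a0 := A.1 0 0; set a1 := A.1 0 1; set a2 := A.1 1 0; set a3 := A.1 1 1
  set b0 := B.1 0 0; set b1 := B.1 0 1; set b2 := B.1 1 0; set b3 := B.1 1 1
  set c0 := C.1 0 0; set c1 := C.1 0 1; set c2 := C.1 1 0; set c3 := C.1 1 1
  linear_combination ((2)*1 + (-1)*c3^2 + (-1)*c0^2 + (-1)*b3^2 + (1)*b3^2*c0*c3 + (-1)*b2*b3*c1*c3 + (1)*b2*b3*c0*c1 + (-1)*b2^2*c1^2 + (-1)*b1*b3*c2*c3 + (1)*b1*b3*c0*c2 + (-1)*b1^2*c2^2 + (1)*b0*b3*c3^2 + (-2)*b0*b3*c0*c3 + (1)*b0*b3*c0^2 + (1)*b0*b2*c1*c3 + (-1)*b0*b2*c0*c1 + (1)*b0*b1*c2*c3 + (-1)*b0*b1*c0*c2 + (-1)*b0^2 + (1)*b0^2*c0*c3) * hA + ((2)*1 + (-2)*c0*c3 + (-1)*a3^2 + (1)*a3^2*c0*c3 + (-1)*a2*a3*c1*c3 + (1)*a2*a3*c0*c1 + (-1)*a2^2*c1^2 + (-1)*a1*a3*c2*c3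 + (1)*a1*a3*c0*c2 + (1)*a1*a2*c3^2 + (-2)*a1*a2*c0*c3 + (1)*a1*a2*c0^2 + (-1)*a1^2*c2^2 + (1)*a0*a2*c1*c3 + (-1)*a0*a2*c0*c1 + (1)*a0*a1*c2*c3 + (-1)*a0*a1*c0*c2 + (-1)*a0^2 + (1)*a0^2*c0*c3) * hB + ((-2)*b1*b2 + (1)*a3^2*b1*b2 + (-1)*a2*a3*b1*b3 + (1)*a2*a3*b0*b1 + (-1)*a2^2*b1^2 + (-1)*a1*a3*b2*b3 + (1)*a1*a3*b0*b2 + (-2)*a1*a2 + (1)*a1*a2*b3^2 + (-2)*a1*a2*b1*b2 + (1)*a1*a2*b0^2 + (-1)*a1^2*b2^2 + (1)*a0*a2*b1*b3 + (-1)*a0*a2*b0*b1 + (1)*a0*a1*b2*b3 + (-1)*a0*a1*b0*b2 + (1)*a0^2*b1*b2) * hC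
end

section
/- Let (a₁, a₂, a₃, a₄, a₁₂, a₁₃, a₂₃) ∈ ℂ⁷ satisfy a₁₂² + a₂₃² + a₁₃² + a₁₂·a₂₃·a₁₃ − (a₁a₂ + a₃a₄)·a₁₂ − (a₂a₃ + a₁a₄)·a₂₃ − (a₁a₃ + a₂a₄)·a₁₃ − (4 − a₁² − a₂² − a₃² − a₄² − a₁a₂a₃a₄) = 0. Then there exist A, B, C ∈ SL(2, ℂ) with tr A = a₁, tr B = a₂, tr C = a₃, tr(A·B·C) = a₄, tr(A·B) = a₁₂, tr(A·C) = a₁₃, tr(B·C) = a₂₃. -/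
/-- Build an element of `SL(2,ℂ)` from four entries and a determinant certificate. -/
noncomputable def mk2 (a b c d : ℂ) (h : a * d - b * c = 1) :
    Matrix.SpecialLinearGroup (Fin 2) ℂ :=
  ⟨!![a, b; c, d], by rw [Matrix.det_fin_two_of]; exact h⟩

lemma trSL2_mk2 (a b c d : ℂ) (h : a * d - b * c = 1) : trSL2 (mk2 a b c d h) = a + d := by
  simp [trSL2, mk2, Matrix.trace_fin_two_of]

lemma trSL2_mul (a b c d e f g i : ℂ) (h h') :
    trSL2 (mk2 a b c d h * mk2 e f g i h') = (a * e + b * g) + (c * f + d * i) := by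
  rw [trSL2, Matrix.SpecialLinearGroup.coe_mul]
  simp [mk2, Matrix.SpecialLinearGroup.coe_mul, Matrix.mul_fin_two,
    Matrix.trace_fin_two_of]

lemma trSL2_mul3 (a b c d e f g i j k l m : ℂ) (h h' h'') :
    trSL2 (mk2 a b c d h * mk2 e f g i h' * mk2 j k l m h'') =
      ((a * e + b * g) * j + (a * f + b * i) * l) +
      ((c * e + d * g) * k + (c * f + d * i) * m) := by
  rw [trSL2, Matrix.SpecialLinearGroup.coe_mul, Matrix.SpecialLinearGroup.coe_mul]
  simp [mk2, Matrix.SpecialLinearGroup.coe_mul, Matrix.mul_fin_two,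
    Matrix.trace_fin_two_of]

lemma exists_add_inv (a : ℂ) : ∃ x : ℂ, x ≠ 0 ∧ x + x⁻¹ = a := by
  obtain ⟨s, hs⟩ := IsAlgClosed.exists_pow_nat_eq (a ^ 2 - 4) (n := 2) (by norm_num)
  have hmul : (a + s) / 2 * ((a - s) / 2) = 1 := by
    field_simp
    linear_combination -hs
  exact ⟨(a + s) / 2, left_ne_zero_of_mul_eq_one hmul,
    by rw [inv_eq_of_mul_eq_one_right hmul]; ring⟩

/-- The irreducible core: triple of triangular matrices realizing a point with `a₄` on the
first branch. -/
lemma core2 (α α' β β' γ γ' a₄ a₁₃ a₂₃ : ℂ)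
    (hαα' : α * α' = 1) (hββ' : β * β' = 1) (hγγ' : γ * γ' = 1)
    (ha4 : a₄ = α * a₂₃ + a₁₃ * β' - α * β' * (γ + γ')) :
    ∃ A B C : Matrix.SpecialLinearGroup (Fin 2) ℂ,
      trSL2 A = α + α' ∧ trSL2 B = β + β' ∧ trSL2 C = γ + γ' ∧ trSL2 (A * B * C) = a₄ ∧
      trSL2 (A * B) = α * β + α' * β' ∧ trSL2 (A * C) = a₁₃ ∧ trSL2 (B * C) = a₂₃ := by
  refine ⟨mk2 α (a₁₃ - α * γ - α' * γ') 0 α' (by linear_combination hαα'),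
          mk2 β (a₂₃ - β * γ - β' * γ') 0 β' (by linear_combination hββ'),
          mk2 γ 0 1 γ' (by linear_combination hγγ'), ?_, ?_, ?_, ?_, ?_, ?_, ?_⟩
  · rw [trSL2_mk2]
  · rw [trSL2_mk2]
  · rw [trSL2_mk2]
  · rw [trSL2_mul3, ha4]; ring
  · rw [trSL2_mul]; ring
  · rw [trSL2_mul]; ring
  · rw [trSL2_mul]; ring

/-- Degenerate (reducible) case. -/
lemma case2 (α α' β β' γ γ' a₄ a₁₃ a₂₃ : ℂ)
    (hαα' : α * α' = 1) (hββ' : β * β' = 1) (hγγ' : γ * γ' = 1)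
    (h : (α * β + α' * β') ^ 2 + a₂₃ ^ 2 + a₁₃ ^ 2 + (α * β + α' * β') * a₂₃ * a₁₃
      - ((α + α') * (β + β') + (γ + γ') * a₄) * (α * β + α' * β') - ((β + β') * (γ + γ') + (α + α') * a₄) * a₂₃ - ((α + α') * (γ + γ') + (β + β') * a₄) * a₁₃
      - (4 - (α + α') ^ 2 - (β + β') ^ 2 - (γ + γ') ^ 2 - a₄ ^ 2 - (α + α') * (β + β') * (γ + γ') * a₄) = 0) :
    ∃ A B C : Matrix.SpecialLinearGroup (Fin 2) ℂ,
      trSL2 A = α + α' ∧ trSL2 B = β + β' ∧ trSL2 C = γ + γ' ∧ trSL2 (A * B * C) = a₄ ∧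
      trSL2 (A * B) = α * β + α' * β' ∧ trSL2 (A * C) = a₁₃ ∧ trSL2 (B * C) = a₂₃ := by
  have hq : (a₄ - (α * a₂₃ + a₁₃ * β' - α * β' * (γ + γ')))
      * (a₄ - (α' * a₂₃ + a₁₃ * β - α' * β * (γ + γ'))) = 0 := by
    linear_combination h
      + (-2 + a₂₃ ^ 2 - β' * γ' * a₂₃ - β' * γ * a₂₃ + β' ^ 2 - β * γ' * a₂₃ - β * γ * a₂₃
          + β * β' * γ' ^ 2 + 2 * β * β' * γ * γ' + β * β' * γ ^ 2 + β ^ 2) * hαα'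
      + (-2 + a₁₃ ^ 2 + γ' ^ 2 + 2 * γ * γ' + γ ^ 2 - α' * γ' * a₁₃ - α' * γ * a₁₃ + α' ^ 2
          - α * γ' * a₁₃ - α * γ * a₁₃ + α ^ 2) * hββ'
  rcases mul_eq_zero.mp hq with h4 | h4 <;> rw [sub_eq_zero] at h4
  · exact core2 α α' β β' γ γ' a₄ a₁₃ a₂₃ hαα' hββ' hγγ' h4
  · obtain ⟨A, B, C, t1, t2, t3, t4, t5, t6, t7⟩ :=
      core2 α' α β' β γ γ' a₄ a₁₃ a₂₃ (by linear_combination hαα')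
        (by linear_combination hββ') hγγ' h4
    refine ⟨A, B, C, ?_, ?_, t3, t4, ?_, t6, t7⟩
    · rw [t1]; ring
    · rw [t2]; ring
    · rw [t5]; ring

set_option maxHeartbeats 4000000 in
/-- Generic (irreducible) case. -/
lemma case1 (a₁ a₂ a₃ a₄ a₁₂ a₁₃ a₂₃ b b' : ℂ) (hbb' : b * b' = 1)
    (h12 : a₁₂ = b + b')
    (hκ : a₁ ^ 2 + a₂ ^ 2 + a₁₂ ^ 2 - a₁ * a₂ * a₁₂ - 4 ≠ 0)
    (h : a₁₂ ^ 2 + a₂₃ ^ 2 + a₁₃ ^ 2 + a₁₂ * a₂₃ * a₁₃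
      - (a₁ * a₂ + a₃ * a₄) * a₁₂ - (a₂ * a₃ + a₁ * a₄) * a₂₃ - (a₁ * a₃ + a₂ * a₄) * a₁₃
      - (4 - a₁ ^ 2 - a₂ ^ 2 - a₃ ^ 2 - a₄ ^ 2 - a₁ * a₂ * a₃ * a₄) = 0) :
    ∃ A B C : Matrix.SpecialLinearGroup (Fin 2) ℂ,
      trSL2 A = a₁ ∧ trSL2 B = a₂ ∧ trSL2 C = a₃ ∧ trSL2 (A * B * C) = a₄ ∧
      trSL2 (A * B) = a₁₂ ∧ trSL2 (A * C) = a₁₃ ∧ trSL2 (B * C) = a₂₃ := by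
  subst h12
  have hD : ((b' - b) * (b - b') - (a₁ * b - a₂) * (a₁ * b' - a₂)) ≠ 0 := fun hc => hκ (by linear_combination -hc + (4 - a₁ ^ 2) * hbb')
  obtain ⟨p, hp⟩ : ∃ p : ℂ, ((b' - b) * (b - b') - (a₁ * b - a₂) * (a₁ * b' - a₂)) * p = ((a₄ - a₃ * b) * (b - b') - (a₁ * b - a₂) * (a₂₃ + b' * a₁₃ - a₂ * a₃)) := ⟨((a₄ - a₃ * b) * (b - b') - (a₁ * b - a₂) * (a₂₃ + b' * a₁₃ - a₂ * a₃)) / ((b' - b) * (b - b') - (a₁ * b - a₂) * (a₁ * b' - a₂)), by rw [mul_comm]; exact div_mul_cancel₀ _ hD⟩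
  obtain ⟨r, hr⟩ : ∃ r : ℂ, ((b' - b) * (b - b') - (a₁ * b - a₂) * (a₁ * b' - a₂)) * r = ((b' - b) * (a₂₃ + b' * a₁₃ - a₂ * a₃) - (a₄ - a₃ * b) * (a₁ * b' - a₂)) := ⟨((b' - b) * (a₂₃ + b' * a₁₃ - a₂ * a₃) - (a₄ - a₃ * b) * (a₁ * b' - a₂)) / ((b' - b) * (b - b') - (a₁ * b - a₂) * (a₁ * b' - a₂)), by rw [mul_comm]; exact div_mul_cancel₀ _ hD⟩
  have hrow1 : (b' - b) * p + (a₁ * b - a₂) * r = a₄ - a₃ * b := by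
    have h0 : ((b' - b) * (b - b') - (a₁ * b - a₂) * (a₁ * b' - a₂)) * ((b' - b) * p + (a₁ * b - a₂) * r - (a₄ - a₃ * b)) = 0 := by
      linear_combination (b' - b) * hp + (a₁ * b - a₂) * hr
    exact sub_eq_zero.mp ((mul_eq_zero.mp h0).resolve_left hD)
  have hrow2 : (a₁ * b' - a₂) * p + (b - b') * r = a₂₃ + b' * a₁₃ - a₂ * a₃ := by
    have h0 : ((b' - b) * (b - b') - (a₁ * b - a₂) * (a₁ * b' - a₂)) * ((a₁ * b' - a₂) * p + (b - b') * r - (a₂₃ + b' * a₁₃ - a₂ * a₃)) = 0 := by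
      linear_combination (a₁ * b' - a₂) * hp + (b - b') * hr
    exact sub_eq_zero.mp ((mul_eq_zero.mp h0).resolve_left hD)
  have hdet : p * (a₃ - p) - (a₁₃ - a₁ * p + r) * r = 1 := by
    have h0 : (p * (a₃ - p) - (a₁₃ - a₁ * p + r) * r - 1) * (((b' - b) * (b - b') - (a₁ * b - a₂) * (a₁ * b' - a₂)) ^ 2 * (a₁ ^ 2 + a₂ ^ 2 + (b + b') ^ 2 - a₁ * a₂ * (b + b') - 4)) = 0 := by
      linear_combination
        ((a₁ ^ 2 + a₂ ^ 2 + (b + b') ^ 2 - a₁ * a₂ * (b + b') - 4) * (a₃ * ((b' - b) * (b - b') - (a₁ * b - a₂) * (a₁ * b' - a₂)) - ((b' - b) * (b - b') - (a₁ * b - a₂) * (a₁ * b' - a₂)) * p - ((a₄ - a₃ * b) * (b - b') - (a₁ * b - a₂) * (a₂₃ + b' * a₁₃ - a₂ * a₃)) + a₁ * (((b' - b) * (b - b') - (a₁ * b - a₂) * (a₁ * b' - a₂)) * r))) * hp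
        - ((a₁ ^ 2 + a₂ ^ 2 + (b + b') ^ 2 - a₁ * a₂ * (b + b') - 4) * (a₁₃ * ((b' - b) * (b - b') - (a₁ * b - a₂) * (a₁ * b' - a₂)) - a₁ * ((a₄ - a₃ * b) * (b - b') - (a₁ * b - a₂) * (a₂₃ + b' * a₁₃ - a₂ * a₃)) + ((b' - b) * (b - b') - (a₁ * b - a₂) * (a₁ * b' - a₂)) * r + ((b' - b) * (a₂₃ + b' * a₁₃ - a₂ * a₃) - (a₄ - a₃ * b) * (a₁ * b' - a₂)))) * hr
        + (-4*a₂₃^2*b'^2 + 8*a₂₃^2*b*b' - 4*a₂₃^2*b^2 - 4*a₁₃*a₂₃*b'^3 + 4*a₁₃*a₂₃*b*b'^2 + 4*a₁₃*a₂₃*b^2*b' - 4*a₁₃*a₂₃*b^3 - 1*a₁₃^2*b'^4 + 2*a₁₃^2*b^2*b'^2 - 1*a₁₃^2*b^4 - 4*a₄^2*b'^2 + 8*a₄^2*b*b' - 4*a₄^2*b^2 + 4*a₃*a₄*b'^3 - 4*a₃*a₄*b*b'^2 - 4*a₃*a₄*b^2*b' + 4*a₃*a₄*b^3 - 1*a₃^2*b'^4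 + 2*a₃^2*b^2*b'^2 - 1*a₃^2*b^4 + 4*a₂*a₄*a₁₃*b'^2 - 8*a₂*a₄*a₁₃*b*b' + 4*a₂*a₄*a₁₃*b^2 + 4*a₂*a₃*a₂₃*b'^2 - 8*a₂*a₃*a₂₃*b*b' + 4*a₂*a₃*a₂₃*b^2 - 4*a₂^2*a₂₃^2 - 4*a₂^2*a₁₃*a₂₃*b' - 4*a₂^2*a₁₃*a₂₃*b - 2*a₂^2*a₁₃^2*b'^2 - 2*a₂^2*a₁₃^2*b^2 - 4*a₂^2*a₄^2 + 4*a₂^2*a₃*a₄*b' + 4*a₂^2*a₃*a₄*b - 2*a₂^2*a₃^2*b'^2 - 2*a₂^2*a₃^2*b^2 + 4*a₂^3*a₄*a₁₃ + 4*a₂^3*a₃*a₂₃ - 1*a₂^4*a₁₃^2 - 1*a₂^4*a₃^2 + 4*a₁*a₄*a₂₃*b'^2 - 8*a₁*a₄*a₂₃*b*b' + 4*a₁*a₄*a₂₃*b^2 + 1*a₁*a₃*a₁₃*b'^4 - 2*a₁*a₃*a₁₃*b^2*b'^2 + 1*a₁*a₃*a₁₃*b^4 + 4*a₁*a₂*a₂₃^2*b'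 + 4*a₁*a₂*a₂₃^2*b + 4*a₁*a₂*a₁₃*a₂₃*b'^2 + 8*a₁*a₂*a₁₃*a₂₃*b*b' + 4*a₁*a₂*a₁₃*a₂₃*b^2 + 2*a₁*a₂*a₁₃^2*b'^3 + 2*a₁*a₂*a₁₃^2*b*b'^2 + 2*a₁*a₂*a₁₃^2*b^2*b' + 2*a₁*a₂*a₁₃^2*b^3 + 4*a₁*a₂*a₄^2*b' + 4*a₁*a₂*a₄^2*b - 8*a₁*a₂*a₃*a₄*b'^2 - 8*a₁*a₂*a₃*a₄*b^2 + 2*a₁*a₂*a₃^2*b'^3 + 2*a₁*a₂*a₃^2*b*b'^2 + 2*a₁*a₂*a₃^2*b^2*b' + 2*a₁*a₂*a₃^2*b^3 + 4*a₁*a₂^2*a₄*a₂₃ - 4*a₁*a₂^2*a₄*a₁₃*b' - 4*a₁*a₂^2*a₄*a₁₃*b - 4*a₁*a₂^2*a₃*a₂₃*b' - 4*a₁*a₂^2*a₃*a₂₃*b + 2*a₁*a₂^2*a₃*a₁₃*b'^2 + 2*a₁*a₂^2*a₃*a₁₃*b^2 + 2*a₁*a₂^3*a₁₃^2*b' + 2*a₁*a₂^3*a₁₃^2*b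 - 4*a₁*a₂^3*a₃*a₄ + 2*a₁*a₂^3*a₃^2*b' + 2*a₁*a₂^3*a₃^2*b + 1*a₁*a₂^4*a₃*a₁₃ + 1*a₁^2*a₂₃^2*b'^2 - 6*a₁^2*a₂₃^2*b*b' + 1*a₁^2*a₂₃^2*b^2 + 1*a₁^2*a₁₃*a₂₃*b'^3 - 5*a₁^2*a₁₃*a₂₃*b*b'^2 - 5*a₁^2*a₁₃*a₂₃*b^2*b' + 1*a₁^2*a₁₃*a₂₃*b^3 - 1*a₁^2*a₁₃^2*b*b'^3 - 2*a₁^2*a₁₃^2*b^2*b'^2 - 1*a₁^2*a₁₃^2*b^3*b' + 1*a₁^2*a₄^2*b'^2 - 6*a₁^2*a₄^2*b*b' + 1*a₁^2*a₄^2*b^2 - 1*a₁^2*a₃*a₄*b'^3 + 5*a₁^2*a₃*a₄*b*b'^2 + 5*a₁^2*a₃*a₄*b^2*b' - 1*a₁^2*a₃*a₄*b^3 - 1*a₁^2*a₃^2*b*b'^3 - 2*a₁^2*a₃^2*b^2*b'^2 - 1*a₁^2*a₃^2*b^3*b' - 4*a₁^2*a₂*a₄*a₂₃*b' - 4*a₁^2*a₂*a₄*a₂₃*b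 - 1*a₁^2*a₂*a₄*a₁₃*b'^2 + 6*a₁^2*a₂*a₄*a₁₃*b*b' - 1*a₁^2*a₂*a₄*a₁₃*b^2 - 1*a₁^2*a₂*a₃*a₂₃*b'^2 + 6*a₁^2*a₂*a₃*a₂₃*b*b' - 1*a₁^2*a₂*a₃*a₂₃*b^2 - 2*a₁^2*a₂*a₃*a₁₃*b'^3 - 2*a₁^2*a₂*a₃*a₁₃*b*b'^2 - 2*a₁^2*a₂*a₃*a₁₃*b^2*b' - 2*a₁^2*a₂*a₃*a₁₃*b^3 + 1*a₁^2*a₂^2*a₂₃^2 + 1*a₁^2*a₂^2*a₁₃*a₂₃*b' + 1*a₁^2*a₂^2*a₁₃*a₂₃*b - 1*a₁^2*a₂^2*a₁₃^2*b'^2 - 3*a₁^2*a₂^2*a₁₃^2*b*b' - 1*a₁^2*a₂^2*a₁₃^2*b^2 + 1*a₁^2*a₂^2*a₄^2 + 3*a₁^2*a₂^2*a₃*a₄*b' + 3*a₁^2*a₂^2*a₃*a₄*b - 1*a₁^2*a₂^2*a₃^2*b'^2 - 3*a₁^2*a₂^2*a₃^2*b*b' - 1*a₁^2*a₂^2*a₃^2*b^2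 - 1*a₁^2*a₂^3*a₄*a₁₃ - 1*a₁^2*a₂^3*a₃*a₂₃ - 2*a₁^2*a₂^3*a₃*a₁₃*b' - 2*a₁^2*a₂^3*a₃*a₁₃*b - 1*a₁^3*a₄*a₂₃*b'^2 + 6*a₁^3*a₄*a₂₃*b*b' - 1*a₁^3*a₄*a₂₃*b^2 + 1*a₁^3*a₃*a₁₃*b*b'^3 + 2*a₁^3*a₃*a₁₃*b^2*b'^2 + 1*a₁^3*a₃*a₁₃*b^3*b' - 1*a₁^3*a₂*a₂₃^2*b' - 1*a₁^3*a₂*a₂₃^2*b - 1*a₁^3*a₂*a₁₃*a₂₃*b'^2 - 2*a₁^3*a₂*a₁₃*a₂₃*b*b' - 1*a₁^3*a₂*a₁₃*a₂₃*b^2 + 1*a₁^3*a₂*a₁₃^2*b*b'^2 + 1*a₁^3*a₂*a₁₃^2*b^2*b' - 1*a₁^3*a₂*a₄^2*b' - 1*a₁^3*a₂*a₄^2*b + 2*a₁^3*a₂*a₃*a₄*b'^2 - 4*a₁^3*a₂*a₃*a₄*b*b' + 2*a₁^3*a₂*a₃*a₄*b^2 + 1*a₁^3*a₂*a₃^2*b*b'^2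 + 1*a₁^3*a₂*a₃^2*b^2*b' - 1*a₁^3*a₂^2*a₄*a₂₃ + 1*a₁^3*a₂^2*a₄*a₁₃*b' + 1*a₁^3*a₂^2*a₄*a₁₃*b + 1*a₁^3*a₂^2*a₃*a₂₃*b' + 1*a₁^3*a₂^2*a₃*a₂₃*b + 1*a₁^3*a₂^2*a₃*a₁₃*b'^2 + 3*a₁^3*a₂^2*a₃*a₁₃*b*b' + 1*a₁^3*a₂^2*a₃*a₁₃*b^2 + 1*a₁^3*a₂^3*a₃*a₄ + 1*a₁^4*a₂₃^2*b*b' + 1*a₁^4*a₁₃*a₂₃*b*b'^2 + 1*a₁^4*a₁₃*a₂₃*b^2*b' + 1*a₁^4*a₄^2*b*b' - 1*a₁^4*a₃*a₄*b*b'^2 - 1*a₁^4*a₃*a₄*b^2*b' + 1*a₁^4*a₂*a₄*a₂₃*b' + 1*a₁^4*a₂*a₄*a₂₃*b - 1*a₁^4*a₂*a₄*a₁₃*b*b' - 1*a₁^4*a₂*a₃*a₂₃*b*b' - 1*a₁^4*a₂*a₃*a₁₃*b*b'^2 - 1*a₁^4*a₂*a₃*a₁₃*b^2*b' - 1*a₁^4*a₂^2*a₃*a₄*b'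 - 1*a₁^4*a₂^2*a₃*a₄*b - 1*a₁^5*a₄*a₂₃*b*b' + 1*a₁^5*a₂*a₃*a₄*b*b') * hbb'
        - ((b' - b) * (b - b') - (a₁ * b - a₂) * (a₁ * b' - a₂)) ^ 2 * h
    have h1 : ((b' - b) * (b - b') - (a₁ * b - a₂) * (a₁ * b' - a₂)) ^ 2 * (a₁ ^ 2 + a₂ ^ 2 + (b + b') ^ 2 - a₁ * a₂ * (b + b') - 4) ≠ 0 := mul_ne_zero (pow_ne_zero 2 hD) hκ
    exact sub_eq_zero.mp ((mul_eq_zero.mp h0).resolve_right h1)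
  refine ⟨mk2 a₁ (-1) 1 0 (by ring), mk2 0 b (-b') a₂ (by linear_combination hbb'),
          mk2 p (a₁₃ - a₁ * p + r) r (a₃ - p) hdet, ?_, ?_, ?_, ?_, ?_, ?_, ?_⟩
  · rw [trSL2_mk2]; ring
  · rw [trSL2_mk2]; ring
  · rw [trSL2_mk2]; ring
  · rw [trSL2_mul3]; linear_combination hrow1
  · rw [trSL2_mul]; ring
  · rw [trSL2_mul]; ring
  · rw [trSL2_mul]; linear_combination hrow2

/-- Surjectivity of the trace coordinates: every point of the Fricke hypersurface
`k = 0` in `ℂ⁷` is realized by a triple of matrices in `SL(2,ℂ)`. -/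
theorem fricke_surjective (a₁ a₂ a₃ a₄ a₁₂ a₁₃ a₂₃ : ℂ)
    (h : a₁₂ ^ 2 + a₂₃ ^ 2 + a₁₃ ^ 2 + a₁₂ * a₂₃ * a₁₃
      - (a₁ * a₂ + a₃ * a₄) * a₁₂ - (a₂ * a₃ + a₁ * a₄) * a₂₃ - (a₁ * a₃ + a₂ * a₄) * a₁₃
      - (4 - a₁ ^ 2 - a₂ ^ 2 - a₃ ^ 2 - a₄ ^ 2 - a₁ * a₂ * a₃ * a₄) = 0) :
    ∃ A B C : Matrix.SpecialLinearGroup (Fin 2) ℂ,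
      trSL2 A = a₁ ∧ trSL2 B = a₂ ∧ trSL2 C = a₃ ∧ trSL2 (A * B * C) = a₄ ∧
      trSL2 (A * B) = a₁₂ ∧ trSL2 (A * C) = a₁₃ ∧ trSL2 (B * C) = a₂₃ := by
  by_cases hκ : a₁ ^ 2 + a₂ ^ 2 + a₁₂ ^ 2 - a₁ * a₂ * a₁₂ - 4 = 0
  · obtain ⟨α, hα0, hα⟩ := exists_add_inv a₁
    obtain ⟨β, hβ0, hβ⟩ := exists_add_inv a₂
    obtain ⟨γ, hγ0, hγ⟩ := exists_add_inv a₃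
    have hαα' : α * α⁻¹ = 1 := mul_inv_cancel₀ hα0
    have hββ' : β * β⁻¹ = 1 := mul_inv_cancel₀ hβ0
    have hγγ' : γ * γ⁻¹ = 1 := mul_inv_cancel₀ hγ0
    subst hα; subst hβ; subst hγ
    have hbr : (a₁₂ - (α * β + α⁻¹ * β⁻¹)) * (a₁₂ - (α * β⁻¹ + α⁻¹ * β)) = 0 := by
      linear_combination hκ + (-2 + β⁻¹ ^ 2 + β ^ 2) * hαα' + (-2 + α⁻¹ ^ 2 + α ^ 2) * hββ'
    rcases mul_eq_zero.mp hbr with h12 | h12 <;> rw [sub_eq_zero] at h12 <;> subst h12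
    · exact case2 α α⁻¹ β β⁻¹ γ γ⁻¹ a₄ a₁₃ a₂₃ hαα' hββ' hγγ' h
    · obtain ⟨A, B, C, t1, t2, t3, t4, t5, t6, t7⟩ :=
        case2 α α⁻¹ β⁻¹ β γ γ⁻¹ a₄ a₁₃ a₂₃ hαα' (by linear_combination hββ') hγγ'
          (by linear_combination h)
      refine ⟨A, B, C, t1, ?_, t3, t4, t5, t6, t7⟩
      rw [t2]; ring
  · obtain ⟨b, hb0, hb⟩ := exists_add_inv a₁₂
    exact case1 a₁ a₂ a₃ a₄ a₁₂ a₁₃ a₂₃ b b⁻¹ (mul_inv_cancel₀ hb0) hb.symm hκ h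
end

section
/- For all A, B, C ∈ SL(2, ℂ), writing t₁ = tr A, t₂ = tr B, t₃ = tr C, t₁₂ = tr(A·B), t₁₃ = tr(A·C), t₂₃ = tr(B·C): tr(A·B·C) · tr(A·C·B) = t₁² + t₂² + t₃² + t₁₂² + t₁₃² + t₂₃² + t₁₂·t₁₃·t₂₃ − t₂·t₃·t₂₃ − t₁·t₂·t₁₂ − t₁·t₃·t₁₃ − 4. -/
/-- The product formula for the two boundary traces of the 2-holed torus:
`tr(ABC)·tr(ACB) = t₁² + t₂² + t₃² + t₁₂² + t₁₃² + t₂₃² + t₁₂t₁₃t₂₃ − t₂t₃t₂₃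
− t₁t₂t₁₂ − t₁t₃t₁₃ − 4`. -/
theorem trace_product_formula (A B C : Matrix.SpecialLinearGroup (Fin 2) ℂ)
    (t₁ t₂ t₃ t₁₂ t₁₃ t₂₃ : ℂ)
    (h₁ : t₁ = trSL2 A) (h₂ : t₂ = trSL2 B) (h₃ : t₃ = trSL2 C)
    (h₁₂ : t₁₂ = trSL2 (A * B)) (h₁₃ : t₁₃ = trSL2 (A * C)) (h₂₃ : t₂₃ = trSL2 (B * C)) :
    trSL2 (A * B * C) * trSL2 (A * C * B)
      = t₁ ^ 2 + t₂ ^ 2 + t₃ ^ 2 + t₁₂ ^ 2 + t₁₃ ^ 2 + t₂₃ ^ 2 + t₁₂ * t₁₃ * t₂₃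
        - t₂ * t₃ * t₂₃ - t₁ * t₂ * t₁₂ - t₁ * t₃ * t₁₃ - 4 := by
  subst h₁ h₂ h₃ h₁₂ h₁₃ h₂₃
  have hA := A.2
  have hB := B.2
  have hC := C.2
  rw [Matrix.det_fin_two] at hA hB hC
  set a := A.1 0 0; set b := A.1 0 1; set c := A.1 1 0; set d := A.1 1 1
  set e := B.1 0 0; set f := B.1 0 1; set g := B.1 1 0; set hh := B.1 1 1
  set i := C.1 0 0; set j := C.1 0 1; set k := C.1 1 0; set l := C.1 1 1
  simp only [trSL2, Matrix.SpecialLinearGroup.coe_mul, Matrix.trace_fin_two,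
    Matrix.mul_apply, Fin.sum_univ_two]
  linear_combination ((-2) + (1*l^2) + (1*i^2) + (1*hh^2) + (-1*hh^2*i*l) + (1*g*hh*j*l) + (-1*g*hh*i*j) + (1*g^2*j^2) + (1*f*hh*k*l) + (-1*f*hh*i*k) + (1*f^2*k^2) + (-1*e*hh*l^2) + (2*e*hh*i*l) + (-1*e*hh*i^2) + (-1*e*g*j*l) + (1*e*g*i*j) + (-1*e*f*k*l) + (1*e*f*i*k) + (1*e^2) + (-1*e^2*i*l)) * hA + ((-2) + (2*i*l) + (1*d^2) + (-1*d^2*i*l) + (1*c*d*j*l) + (-1*c*d*i*j) + (1*c^2*j^2) + (1*b*d*k*l) + (-1*b*d*i*k) + (-1*b*c*l^2) + (2*b*c*i*l) + (-1*b*c*i^2) + (1*b^2*k^2) + (-1*a*c*j*l) + (1*a*c*i*j) + (-1*a*b*k*l) + (1*a*b*i*k) + (1*a^2) + (-1*a^2*i*l)) * hB + ((2*f*g) + (-1*d^2*f*g) + (1*c*d*f*hh) + (-1*c*d*e*f) + (1*c^2*f^2) + (1*b*d*g*hh) + (-1*b*d*e*g) + (2*b*c) + (-1*b*c*hh^2)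 + (2*b*c*f*g) + (-1*b*c*e^2) + (1*b^2*g^2) + (-1*a*c*f*hh) + (1*a*c*e*f) + (-1*a*b*g*hh) + (1*a*b*e*g) + (-1*a^2*f*g)) * hC
end

section
/- In the polynomial ring ℝ[t₁, t₂, t₃, t₄, t₁₂, t₁₃, t₂₃], let k := t₁₂² + t₂₃² + t₁₃² + t₁₂t₂₃t₁₃ − c₁₂t₁₂ − c₂₃t₂₃ − c₁₃t₁₃ − c₀, p₀ := c₁₂ − t₂₃t₁₃ − t₁₂, and p₁₂ := t₁₂, where c₁₂ := t₁t₂ + t₃t₄, c₂₃ := t₂t₃ + t₁t₄, c₁₃ := t₁t₃ + t₂t₄, c₀ := 4 − t₁² − t₂² − t₃² − t₄² − t₁t₂t₃t₄. Then the determinant of the 3×3 matrix whose rows are the partial derivatives of k, p₀, p₁₂ (in that order) with respect to the variables t₁₂, t₁₃, t₂₃ (in that column order) equals s := 2t₂₃² − c₂₃t₂₃ − 2t₁₃² + c₁₃t₁₃. -/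
namespace FrickeStmt6

open MvPolynomial

/-- The seven trace variables `t₁, t₂, t₃, t₄, t₁₂, t₁₃, t₂₃` of `ℝ[K]`. -/
noncomputable def t₁ : MvPolynomial (Fin 7) ℝ := X 0
noncomputable def t₂ : MvPolynomial (Fin 7) ℝ := X 1
noncomputable def t₃ : MvPolynomial (Fin 7) ℝ := X 2
noncomputable def t₄ : MvPolynomial (Fin 7) ℝ := X 3
noncomputable def t₁₂ : MvPolynomial (Fin 7) ℝ := X 4
noncomputable def t₁₃ : MvPolynomial (Fin 7) ℝ := X 5
noncomputable def t₂₃ : MvPolynomial (Fin 7) ℝ := X 6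

noncomputable def c₁₂ : MvPolynomial (Fin 7) ℝ := t₁ * t₂ + t₃ * t₄
noncomputable def c₂₃ : MvPolynomial (Fin 7) ℝ := t₂ * t₃ + t₁ * t₄
noncomputable def c₁₃ : MvPolynomial (Fin 7) ℝ := t₁ * t₃ + t₂ * t₄
noncomputable def c₀ : MvPolynomial (Fin 7) ℝ :=
  4 - t₁ ^ 2 - t₂ ^ 2 - t₃ ^ 2 - t₄ ^ 2 - t₁ * t₂ * t₃ * t₄

/-- The Fricke polynomial `k`. -/
noncomputable def k : MvPolynomial (Fin 7) ℝ :=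
  t₁₂ ^ 2 + t₂₃ ^ 2 + t₁₃ ^ 2 + t₁₂ * t₂₃ * t₁₃
    - c₁₂ * t₁₂ - c₂₃ * t₂₃ - c₁₃ * t₁₃ - c₀

/-- The trace polynomial `p₀` of the curve `F₀`. -/
noncomputable def p₀ : MvPolynomial (Fin 7) ℝ := c₁₂ - t₂₃ * t₁₃ - t₁₂

/-- The trace polynomial `p₁₂` of the curve `F₁F₂`. -/
noncomputable def p₁₂ : MvPolynomial (Fin 7) ℝ := t₁₂

/-- The polynomial `s` cutting out the dependency locus of the 4-holed sphere. -/
noncomputable def s : MvPolynomial (Fin 7) ℝ :=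
  2 * t₂₃ ^ 2 - c₂₃ * t₂₃ - 2 * t₁₃ ^ 2 + c₁₃ * t₁₃

lemma pd_simp (i : Fin 7) (j : Fin 7) :
    pderiv i (X j : MvPolynomial (Fin 7) ℝ) = if i = j then 1 else 0 := by
  rw [pderiv_X]; split <;> simp_all [Pi.single_apply]

lemma pd_four (i : Fin 7) : pderiv i (4 : MvPolynomial (Fin 7) ℝ) = 0 := by
  rw [show (4 : MvPolynomial (Fin 7) ℝ) = C (4:ℝ) from (map_ofNat C 4).symm, pderiv_C]

lemma pk4 : pderiv 4 k = 2 * t₁₂ + t₂₃ * t₁₃ - c₁₂ := by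
  simp only [k, c₁₂, c₂₃, c₁₃, c₀, t₁, t₂, t₃, t₄, t₁₂, t₁₃, t₂₃, map_add, map_sub, map_mul,
    map_pow, Derivation.leibniz, Derivation.leibniz_pow, pd_simp, pd_four, Fin.reduceEq, reduceIte, reduceCtorEq, smul_eq_mul, smul_zero]
  ring

lemma pk5 : pderiv 5 k = 2 * t₁₃ + t₁₂ * t₂₃ - c₁₃ := by
  simp only [k, c₁₂, c₂₃, c₁₃, c₀, t₁, t₂, t₃, t₄, t₁₂, t₁₃, t₂₃, map_add, map_sub, map_mul,
    map_pow, Derivation.leibniz, Derivation.leibniz_pow, pd_simp, pd_four, Fin.reduceEq, reduceIte, reduceCtorEq, smul_eq_mul, smul_zero]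
  ring

lemma pk6 : pderiv 6 k = 2 * t₂₃ + t₁₂ * t₁₃ - c₂₃ := by
  simp only [k, c₁₂, c₂₃, c₁₃, c₀, t₁, t₂, t₃, t₄, t₁₂, t₁₃, t₂₃, map_add, map_sub, map_mul,
    map_pow, Derivation.leibniz, Derivation.leibniz_pow, pd_simp, pd_four, Fin.reduceEq, reduceIte, reduceCtorEq, smul_eq_mul, smul_zero]
  ring

lemma pp04 : pderiv 4 p₀ = -1 := by
  simp only [p₀, c₁₂, t₁, t₂, t₃, t₄, t₁₂, t₁₃, t₂₃, map_add, map_sub, map_mul,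
    Derivation.leibniz, pd_simp, Fin.reduceEq, reduceIte, reduceCtorEq, smul_eq_mul, smul_zero]
  ring

lemma pp05 : pderiv 5 p₀ = -t₂₃ := by
  simp only [p₀, c₁₂, t₁, t₂, t₃, t₄, t₁₂, t₁₃, t₂₃, map_add, map_sub, map_mul,
    Derivation.leibniz, pd_simp, Fin.reduceEq, reduceIte, reduceCtorEq, smul_eq_mul, smul_zero]
  ring

lemma pp06 : pderiv 6 p₀ = -t₁₃ := by
  simp only [p₀, c₁₂, t₁, t₂, t₃, t₄, t₁₂, t₁₃, t₂₃, map_add, map_sub, map_mul,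
    Derivation.leibniz, pd_simp, Fin.reduceEq, reduceIte, reduceCtorEq, smul_eq_mul, smul_zero]
  ring

lemma pp124 : pderiv 4 p₁₂ = 1 := by simp [p₁₂, t₁₂, pd_simp]
lemma pp125 : pderiv 5 p₁₂ = 0 := by simp [p₁₂, t₁₂, pd_simp]
lemma pp126 : pderiv 6 p₁₂ = 0 := by simp [p₁₂, t₁₂, pd_simp]

set_option maxHeartbeats 1000000 in
/-- The determinant of the Jacobian of `(k, p₀, p₁₂)` with respect to
`(t₁₂, t₁₃, t₂₃)` equals `s = 2t₂₃² − c₂₃t₂₃ − 2t₁₃² + c₁₃t₁₃`. -/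
theorem jacobian_det_eq_s :
    Matrix.det !![pderiv 4 k, pderiv 5 k, pderiv 6 k;
                  pderiv 4 p₀, pderiv 5 p₀, pderiv 6 p₀;
                  pderiv 4 p₁₂, pderiv 5 p₁₂, pderiv 6 p₁₂] = s := by
  rw [pk4, pk5, pk6, pp04, pp05, pp06, pp124, pp125, pp126, Matrix.det_fin_three]
  simp [s]
  ring

end FrickeStmt6
end
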